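/- Let X = ℂPⁿ with v_i = p_*(z_i ∂/∂z_i), W = span_ℂ{v_1,…,v_n}. For 1 ≤ k ≤ n, H^0(X, ∧^{k} 𝒯_X) = (H^0(X, ∧^{k−1} 𝒯_X) ∧ W) ⊕ (⊕_{I ∈ S(k)} ℂ χ^I · 𝒱_I), where S(k) is the set of all I ∈ M with ⟨I, e_i⟩ = m_i ≥ −1 for all 0 ≤ i ≤ n and |I| = k. -/

import Mathlib

/-!
Formalization of statements from "Poisson Cohomology of holomorphic toric Poisson
manifolds. I." (W. Hong).

Modeling conventions.  Mathlib has no holomorphic geometry of ℂPⁿ, so we use the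
standard faithful algebraic model: a holomorphic multivector field on a toric variety
is determined by its restriction to the dense open torus, where (in the invariant
frame and with Laurent-monomial coefficients) multivector fields form the algebra
`MV n = AddMonoidAlgebra (ExteriorAlgebra ℂ ℂⁿ) ℤⁿ`: the element `single I ω`
represents `χ^I ⊗ ω` (`χ^I` the Laurent monomial of weight `I`, `ω` a constant
multivector in the frame `v_1, …, v_n`, `v_i = ρ(e_i)`).  Multiplication is the
wedge product.  Similarly `AMV n` models multivector fields on ℂ^{n+1}∖{0} in the
frame `u_i = z_i ∂/∂z_i`.  Holomorphic multivector fields on ℂPⁿ are defined as the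
image under `p_*` of the k-vector fields on ℂ^{n+1} with homogeneous polynomial
coefficients of degree k (this is exactly the classical description of
`H⁰(ℂPⁿ, ∧ᵏ𝒯)`, due to Bondal).  The Schouten differential `d_π = [π,·]` of a
torus-invariant bivector `π = ρ(Π)` acts weightwise by
`[π, χ^I ⊗ ω] = χ^I ⊗ (ι(ι_I Π) ∧ ω)`.
-/

noncomputable section
open Finset

namespace CPn

variable (n : ℕ)

/-- Laurent multivector fields on the open torus (ℂ*)ⁿ ⊆ ℂPⁿ, in the invariant frame. -/
abbrev MV := AddMonoidAlgebra (ExteriorAlgebra ℂ (Fin n → ℂ)) (Fin n → ℤ)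

/-- Ambient model: multivector fields on ℂ^{n+1}∖{0} with Laurent-monomial
coefficients, in the frame u_i = z_i ∂/∂z_i. -/
abbrev AMV := AddMonoidAlgebra (ExteriorAlgebra ℂ (Fin (n+1) → ℂ)) (Fin (n+1) → ℤ)

/-- The Laurent monomial χ^I as a multivector field (of degree 0). -/
def χ (I : Fin n → ℤ) : MV n := AddMonoidAlgebra.single I 1

/-- The vectors e_0 = −(e_1+⋯+e_n), e_1, …, e_n in N_ℂ = ℂⁿ. -/
def EE : Fin (n+1) → (Fin n → ℂ) :=
  Fin.cases (fun _ => -1) (fun j => Pi.single j 1)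

/-- The holomorphic vector fields v_i = ρ(e_i) = p_*(z_i ∂/∂z_i), 0 ≤ i ≤ n. -/
def v (i : Fin (n+1)) : MV n :=
  AddMonoidAlgebra.single 0 (ExteriorAlgebra.ι ℂ (EE n i))

/-- W = span_ℂ{v_1,…,v_n} = ρ(N_ℂ). -/
def W : Submodule ℂ (MV n) :=
  Submodule.span ℂ {x | ∃ i : Fin (n+1), i ≠ 0 ∧ x = v n i}

/-- Extension of a weight I ∈ M ≅ ℤⁿ to (m_0, m_1, …, m_n), m_0 = −Σᵢ m_i, m_i = ⟨I,e_i⟩. -/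
def mext (I : Fin n → ℤ) : Fin (n+1) → ℤ :=
  Fin.cases (-(∑ j, I j)) I

/-- The set of indices 0 ≤ i ≤ n with m_i = −1. -/
def deg1Set (I : Fin n → ℤ) : Finset (Fin (n+1)) :=
  univ.filter fun i => mext n I i = -1

/-- |I| = number of entries of (m_0,…,m_n) equal to −1. -/
def wt (I : Fin n → ℤ) : ℕ := (deg1Set n I).card

/-- 𝒱_I = v_{i_1} ∧ ⋯ ∧ v_{i_l}, where m_{i_1},…,m_{i_l} are the entries equal to −1. -/
def VI (I : Fin n → ℤ) : MV n :=
  (((deg1Set n I).sort (· ≤ ·)).map (v n)).prod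

/-- χ^I · 𝒱_I. -/
def chiVI (I : Fin n → ℤ) : MV n := χ n I * VI n I

/-- ℰ_I = e_{i_1} ∧ ⋯ ∧ e_{i_l} ∈ ∧^l N_ℂ (inside the exterior algebra of N_ℂ). -/
def EI (I : Fin n → ℤ) : ExteriorAlgebra ℂ (Fin n → ℂ) :=
  (((deg1Set n I).sort (· ≤ ·)).map fun i => ExteriorAlgebra.ι ℂ (EE n i)).prod

/-- V_I^k = ℂ(χ^I·𝒱_I) ∧ W^{k−|I|}. -/
def VIk (I : Fin n → ℤ) (k : ℕ) : Submodule ℂ (MV n) :=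
  Submodule.span ℂ {chiVI n I} * (W n) ^ (k - wt n I)

/-- u_i = z_i ∂/∂z_i on ℂ^{n+1}. -/
def uu (i : Fin (n+1)) : AMV n :=
  AddMonoidAlgebra.single 0 (ExteriorAlgebra.ι ℂ (Pi.single i 1))

/-- The Euler vector field e⃗ = Σ_i z_i ∂/∂z_i. -/
def eulerA : AMV n := ∑ i, uu n i

/-- The derivative of p : ℂ^{n+1}∖{0} → ℂPⁿ on the invariant frame:
the frame vector of u_i is sent to e_i (so e_0 = −Σ e_j); in coordinates
w ↦ (w_j − w_0)_{1≤j≤n}. -/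
def q : (Fin (n+1) → ℂ) →ₗ[ℂ] (Fin n → ℂ) :=
  LinearMap.pi fun j =>
    (LinearMap.proj j.succ : (Fin (n+1) → ℂ) →ₗ[ℂ] ℂ) -
      (LinearMap.proj (0 : Fin (n+1)) : (Fin (n+1) → ℂ) →ₗ[ℂ] ℂ)

/-- Pushforward p_* along p : ℂ^{n+1}∖{0} → ℂPⁿ (on torus-invariant fields, i.e.
those of weight a with Σ a = 0, this is the honest pushforward; the weight a
corresponds to the monomial of weight (a_1,…,a_n) in the coordinates t_j = z_j/z_0). -/
def pstar : AMV n →ₗ[ℂ] MV n :=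
  (Finsupp.lsum ℂ fun a =>
    (AddMonoidAlgebra.lsingle (fun j : Fin n => a j.succ) :
        ExteriorAlgebra ℂ (Fin n → ℂ) →ₗ[ℂ] MV n) ∘ₗ
      (ExteriorAlgebra.map (q n)).toLinearMap) ∘ₗ
    (AddMonoidAlgebra.coeffLinearEquiv ℂ).toLinearMap

/-- u_{i_1} ∧ ⋯ ∧ u_{i_k} for T = {i_1 < ⋯ < i_k} (constant-coefficient part). -/
def wedgeT (T : Finset (Fin (n+1))) : ExteriorAlgebra ℂ (Fin (n+1) → ℂ) :=
  ((T.sort (· ≤ ·)).map fun i => ExteriorAlgebra.ι ℂ (Pi.single i 1)).prod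

/-- F̃_k: the k-vector fields on ℂ^{n+1} whose coefficients in the frame
∂_{i_1}∧⋯∧∂_{i_k} are homogeneous polynomials of degree k, restricted to the torus
(z^b ∂_T = z^{b−ε_T} u_T). -/
def Ftilde (k : ℕ) : Submodule ℂ (AMV n) :=
  Submodule.span ℂ
    { x | ∃ (b : Fin (n+1) → ℕ) (T : Finset (Fin (n+1))), T.card = k ∧ (∑ i, b i) = k ∧
        x = AddMonoidAlgebra.single (fun i => (b i : ℤ) - (if i ∈ T then 1 else 0)) (wedgeT n T) }

/-- H⁰(ℂPⁿ, ∧ᵏ𝒯) = p_*(F̃_k): holomorphic k-vector fields on ℂPⁿ. -/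
def H0 (k : ℕ) : Submodule ℂ (MV n) := Submodule.map (pstar n) (Ftilde n k)

/-- ι_I Π ∈ N_ℂ for Π = Σ_{i<j} a i j · e_i∧e_j, where
ι_I (e_i∧e_j) = ⟨I,e_i⟩e_j − ⟨I,e_j⟩e_i. -/
def contr (a : Fin n → Fin n → ℂ) (I : Fin n → ℤ) : Fin n → ℂ := fun j =>
  ∑ p ∈ univ.filter (fun p : Fin n × Fin n => p.1 < p.2),
    a p.1 p.2 * ((I p.1 : ℂ) * (if p.2 = j then 1 else 0) -
      (I p.2 : ℂ) * (if p.1 = j then 1 else 0))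

/-- The toric bivector field π = Σ_{1≤i<j≤n} a i j · v_i ∧ v_j. -/
def piT (a : Fin n → Fin n → ℂ) : MV n :=
  ∑ p ∈ univ.filter (fun p : Fin n × Fin n => p.1 < p.2),
    a p.1 p.2 • (v n p.1.succ * v n p.2.succ)

/-- The Poisson differential d_π = [π, ·] (Schouten bracket with π = ρ(Π)):
on the toric frame it is given weightwise by [π, χ^I ⊗ ω] = χ^I ⊗ (ι(ι_I Π) ∧ ω). -/
def dPi (a : Fin n → Fin n → ℂ) : MV n →ₗ[ℂ] MV n :=
  (Finsupp.lsum ℂ fun I =>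
    (AddMonoidAlgebra.lsingle I : ExteriorAlgebra ℂ (Fin n → ℂ) →ₗ[ℂ] MV n) ∘ₗ
      LinearMap.mulLeft ℂ (ExteriorAlgebra.ι ℂ (contr n a I))) ∘ₗ
    (AddMonoidAlgebra.coeffLinearEquiv ℂ).toLinearMap

/-- S_k : weights I with all m_i ≥ −1 (0 ≤ i ≤ n) and |I| ≤ k. -/
def Sk (k : ℕ) : Set (Fin n → ℤ) := {I | (∀ i, -1 ≤ mext n I i) ∧ wt n I ≤ k}

/-- S(k) : weights I with all m_i ≥ −1 (0 ≤ i ≤ n) and |I| = k. -/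
def Slevel (k : ℕ) : Set (Fin n → ℤ) := {I | (∀ i, -1 ≤ mext n I i) ∧ wt n I = k}

/-- S_k(π) : I ∈ S_k satisfying (ι_I Π) ∧ ℰ_I = 0. -/
def SkPi (a : Fin n → Fin n → ℂ) (k : ℕ) : Set (Fin n → ℤ) :=
  {I | I ∈ Sk n k ∧ ExteriorAlgebra.ι ℂ (contr n a I) * EI n I = 0}

/-- S(k,π) : I with |I| = k, all m_i ≥ −1, satisfying (ι_I Π) ∧ ℰ_I = 0. -/
def SlevelPi (a : Fin n → Fin n → ℂ) (k : ℕ) : Set (Fin n → ℤ) :=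
  {I | I ∈ Slevel n k ∧ ExteriorAlgebra.ι ℂ (contr n a I) * EI n I = 0}

/-- Poisson cocycles in degree k: holomorphic k-vector fields killed by d_π. -/
def cocycles (a : Fin n → Fin n → ℂ) (k : ℕ) : Submodule ℂ (MV n) :=
  H0 n k ⊓ LinearMap.ker (dPi n a)

/-- Poisson coboundaries in degree k: d_π of the holomorphic (k−1)-vector fields. -/
def cobound (a : Fin n → Fin n → ℂ) : ℕ → Submodule ℂ (MV n)
  | 0 => ⊥
  | (k+1) => Submodule.map (dPi n a) (H0 n k)

/-- The coefficient matrix of the standard Poisson structure π_st = Σ_{1≤i<j≤n} v_i∧v_j. -/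
def aST : Fin n → Fin n → ℂ := fun _ _ => 1

/-!
By Bondal's description, `H⁰(ℂPⁿ, ∧ᵏ𝒯)` is spanned by the monomial fields `χ^I ⊗ e_T` with all
`m_i ≥ -1`, `{i | m_i = -1} ⊆ T` and `|T| = k` (the image of `z^b ∂_T` has `m = b - 1_T`).
If `T = {i | m_i = -1}` this field is `χ^I 𝒱_I` with `I ∈ S(k)`; otherwise pick `i ∈ T` with
`m_i ≠ -1`, and the field is `±(χ^I ⊗ e_{T∖i}) ∧ v_i ∈ H⁰(∧^{k-1}𝒯) ∧ W`.
The sums are direct because wedging with `W` does not change the weight `I`: the weights occurring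
in `H⁰(∧^{k-1}𝒯) ∧ W` have `|I| ≤ k - 1`, and the `χ^I 𝒱_I` have pairwise distinct weights.
-/

end CPn

section AnticommutingProducts

variable {A ι : Type*} [Ring A] {x : ι → A}

theorem List.Perm.prod_map_eq_or_eq_neg_of_anticomm (hx : ∀ i j, x i * x j = -(x j * x i))
    {l l' : List ι} (h : l.Perm l') :
    (l.map x).prod = (l'.map x).prod ∨ (l.map x).prod = -(l'.map x).prod := by
  induction h with
  | nil => exact Or.inl rfl
  | cons a _ ih => rcases ih with h | h <;> simp [h]
  | swap a b l =>
    right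
    simp only [List.map_cons, List.prod_cons, ← mul_assoc, hx b a, neg_mul]
  | trans _ _ ih₁ ih₂ => rcases ih₁ with h₁ | h₁ <;> rcases ih₂ with h₂ | h₂ <;> simp [h₁, h₂]

variable [LinearOrder ι]

def Finset.sortedProd (x : ι → A) (T : Finset ι) : A := ((T.sort (· ≤ ·)).map x).prod

theorem Finset.sortedProd_eq_or_eq_neg_sortedProd_erase_mul
    (hx : ∀ i j, x i * x j = -(x j * x i)) {T : Finset ι} {i : ι} (hi : i ∈ T) :
    T.sortedProd x = (T.erase i).sortedProd x * x i ∨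
      T.sortedProd x = -((T.erase i).sortedProd x * x i) := by
  have hperm : (T.sort (· ≤ ·)).Perm ((T.erase i).sort (· ≤ ·) ++ [i]) := by
    rw [← Multiset.coe_eq_coe, ← Multiset.coe_add, Finset.sort_eq, Finset.sort_eq,
      Multiset.coe_singleton, Finset.erase_val, add_comm, Multiset.singleton_add,
      Multiset.cons_erase hi]
  simpa [Finset.sortedProd] using hperm.prod_map_eq_or_eq_neg_of_anticomm hx

theorem Finset.sortedProd_mul_eq_or_eq_neg_sortedProd_insert
    (hx : ∀ i j, x i * x j = -(x j * x i)) {S : Finset ι} {i : ι} (hi : i ∉ S) :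
    S.sortedProd x * x i = (insert i S).sortedProd x ∨
      S.sortedProd x * x i = -(insert i S).sortedProd x := by
  have := sortedProd_eq_or_eq_neg_sortedProd_erase_mul hx (mem_insert_self i S)
  rw [erase_insert hi] at this
  rcases this with h | h <;> simp [h]

theorem Finset.sortedProd_mul_eq_zero_of_mem (hx : ∀ i j, x i * x j = -(x j * x i))
    (hx₀ : ∀ i, x i * x i = 0) {S : Finset ι} {i : ι} (hi : i ∈ S) :
    S.sortedProd x * x i = 0 := by
  rcases sortedProd_eq_or_eq_neg_sortedProd_erase_mul hx hi with h | h <;>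
    simp [h, mul_assoc, hx₀]

end AnticommutingProducts

theorem ExteriorAlgebra.ι_mul_ι_anticomm {R M : Type*} [CommRing R] [AddCommGroup M] [Module R M]
    (a b : M) : ι R a * ι R b = -(ι R b * ι R a) :=
  eq_neg_of_add_eq_zero_left (ι_add_mul_swap a b)

namespace AddMonoidAlgebra

variable {R S M : Type*} [Semiring R] [Semiring S] [Module R S]

theorem single_mem_supported {s : Set M} {m : M} (a : S) (h : m ∈ s) :
    single m a ∈ supported R S s :=
  Finsupp.single_mem_supported R a h

theorem disjoint_supported_supported {s t : Set M} (h : Disjoint s t) :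
    Disjoint (supported R S s) (supported R S t) := by
  rw [supported_eq_map, supported_eq_map]
  exact Submodule.disjoint_map (coeffLinearEquiv R).symm.injective
    (Finsupp.disjoint_supported_supported h)

theorem iSupIndep_of_le_supported_singleton {ι : Type*} {p : ι → Submodule R (AddMonoidAlgebra S M)}
    {f : ι → M} (hf : f.Injective) (hp : ∀ i, p i ≤ supported R S {f i}) : iSupIndep p := fun i =>
  (disjoint_supported_supported disjoint_compl_right).mono (hp i)
    (iSup₂_le fun j hj => (hp j).trans (supported_mono (by simpa using (hf.ne hj).symm)))

end AddMonoidAlgebra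

namespace CPn

open AddMonoidAlgebra

variable (n : ℕ)

def wedgeE (T : Finset (Fin (n+1))) : ExteriorAlgebra ℂ (Fin n → ℂ) :=
  T.sortedProd fun i => ExteriorAlgebra.ι ℂ (EE n i)

lemma v_eq_singleZeroRingHom (i : Fin (n+1)) :
    v n i = singleZeroRingHom (ExteriorAlgebra.ι ℂ (EE n i)) := rfl

lemma single_mul_v (I : Fin n → ℤ) (ω : ExteriorAlgebra ℂ (Fin n → ℂ)) (i : Fin (n+1)) :
    (single I ω : MV n) * v n i = single I (ω * ExteriorAlgebra.ι ℂ (EE n i)) := by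
  rw [v, single_mul_single, add_zero]

lemma chiVI_eq_single (I : Fin n → ℤ) : chiVI n I = single I (wedgeE n (deg1Set n I)) := by
  have hVI : VI n I = single 0 (wedgeE n (deg1Set n I)) := by
    change _ = singleZeroRingHom _
    rw [VI, wedgeE, Finset.sortedProd, map_list_prod, List.map_map]
    rfl
  rw [chiVI, hVI, χ, single_mul_single, add_zero, one_mul]

lemma v_mem_W (i : Fin (n+1)) : v n i ∈ W n := by
  by_cases hi : i = 0
  · have hEE : EE n 0 = -∑ j : Fin n, EE n j.succ := by
      funext x
      simp [EE, Finset.sum_apply, Pi.single_apply]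
    have hv : v n 0 = -∑ j : Fin n, v n j.succ := by
      simp only [v_eq_singleZeroRingHom, hEE, map_neg, map_sum]
    rw [hi, hv]
    exact neg_mem (sum_mem fun j _ => Submodule.subset_span ⟨j.succ, j.succ_ne_zero, rfl⟩)
  · exact Submodule.subset_span ⟨i, hi, rfl⟩

lemma mext_succ (I : Fin n → ℤ) (j : Fin n) : mext n I j.succ = I j := rfl

lemma sum_mext (I : Fin n → ℤ) : ∑ i, mext n I i = 0 := by
  simp [Fin.sum_univ_succ, mext]

lemma mext_comp_succ_of_sum_eq_zero (a : Fin (n+1) → ℤ) (ha : ∑ i, a i = 0) :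
    mext n (fun j => a j.succ) = a := by
  funext i
  induction i using Fin.cases with
  | zero =>
    rw [Fin.sum_univ_succ] at ha
    simp only [mext, Fin.cases_zero]
    linarith
  | succ j => rfl

lemma pstar_single (a : Fin (n+1) → ℤ) (ω : ExteriorAlgebra ℂ (Fin (n+1) → ℂ)) :
    pstar n (single a ω) = single (fun j => a j.succ) (ExteriorAlgebra.map (q n) ω) := by
  rw [pstar, LinearMap.comp_apply]
  erw [Finsupp.lsum_single]
  rfl

lemma map_q_wedgeT (T : Finset (Fin (n+1))) :
    ExteriorAlgebra.map (q n) (wedgeT n T) = wedgeE n T := by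
  have hq : ∀ i, q n (Pi.single i 1) = EE n i := by
    intro i
    funext j
    induction i using Fin.cases with
    | zero => simp [q, EE]
    | succ s => simp [q, EE, Pi.single_apply]
  rw [wedgeT, wedgeE, Finset.sortedProd, map_list_prod, List.map_map]
  simp [Function.comp_def, hq]

/-- The images `χ^I ⊗ e_T` under `p_*` of the monomial fields `z^b ∂_T`, `b = m + 1_T ≥ 0`. -/
def monomialFields (k : ℕ) : Set (MV n) :=
  {x | ∃ (I : Fin n → ℤ) (T : Finset (Fin (n+1))), (∀ i, -1 ≤ mext n I i) ∧
    deg1Set n I ⊆ T ∧ T.card = k ∧ x = single I (wedgeE n T)}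

lemma pstar_mem_monomialFields {k : ℕ} (b : Fin (n+1) → ℕ) {T : Finset (Fin (n+1))}
    (hT : T.card = k) (hb : ∑ i, b i = k) :
    pstar n (single (fun i => (b i : ℤ) - if i ∈ T then 1 else 0) (wedgeT n T)) ∈
      monomialFields n k := by
  set a : Fin (n+1) → ℤ := fun i => (b i : ℤ) - if i ∈ T then 1 else 0
  have hmext : mext n (fun j => a j.succ) = a := by
    refine mext_comp_succ_of_sum_eq_zero n a ?_
    simp [a, Finset.sum_sub_distrib, Finset.sum_ite_mem, hT, ← hb]
  refine ⟨_, T, fun i => ?_, fun i hi => ?_, hT, by rw [pstar_single, map_q_wedgeT]⟩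
  · rw [hmext]
    simp only [a]
    split_ifs <;> omega
  · rw [deg1Set, Finset.mem_filter, hmext] at hi
    by_contra hiT
    simp only [a, if_neg hiT] at hi
    omega

lemma mem_pstar_Ftilde_of_mem_monomialFields {k : ℕ} {x : MV n} (hx : x ∈ monomialFields n k) :
    ∃ y ∈ Ftilde n k, pstar n y = x := by
  obtain ⟨I, T, hI, hIT, hT, rfl⟩ := hx
  set b : Fin (n+1) → ℕ := fun i => (mext n I i + if i ∈ T then 1 else 0).toNat
  have hb : ∀ i, (b i : ℤ) = mext n I i + if i ∈ T then 1 else 0 := by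
    intro i
    have := hI i
    by_cases hiT : i ∈ T
    · simp only [b, if_pos hiT]
      omega
    · have : mext n I i ≠ -1 := fun h => hiT (hIT (by simp [deg1Set, h]))
      simp only [b, if_neg hiT]
      omega
  have hbsum : ∑ i, b i = k := by
    have : ((∑ i, b i : ℕ) : ℤ) = k := by
      simp [hb, Finset.sum_add_distrib, sum_mext, Finset.sum_ite_mem, hT]
    exact_mod_cast this
  refine ⟨_, Submodule.subset_span ⟨b, T, hT, hbsum, rfl⟩, ?_⟩
  rw [pstar_single, map_q_wedgeT]
  congr 1
  funext j
  rw [hb j.succ, mext_succ]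
  ring

lemma H0_eq_span_monomialFields (k : ℕ) : H0 n k = Submodule.span ℂ (monomialFields n k) := by
  apply le_antisymm
  · rw [H0, Ftilde, Submodule.map_span, Submodule.span_le]
    rintro _ ⟨_, ⟨b, T, hT, hb, rfl⟩, rfl⟩
    exact Submodule.subset_span (pstar_mem_monomialFields n b hT hb)
  · rw [Submodule.span_le]
    intro x hx
    obtain ⟨y, hy, rfl⟩ := mem_pstar_Ftilde_of_mem_monomialFields n hx
    exact Submodule.mem_map_of_mem hy

lemma ι_EE_anticomm (i j : Fin (n+1)) :
    ExteriorAlgebra.ι ℂ (EE n i) * ExteriorAlgebra.ι ℂ (EE n j) =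
      -(ExteriorAlgebra.ι ℂ (EE n j) * ExteriorAlgebra.ι ℂ (EE n i)) :=
  ExteriorAlgebra.ι_mul_ι_anticomm _ _

lemma chiVI_mem_H0 {k : ℕ} {I : Fin n → ℤ} (hI : I ∈ Slevel n k) : chiVI n I ∈ H0 n k := by
  rw [H0_eq_span_monomialFields]
  exact Submodule.subset_span ⟨I, _, hI.1, subset_rfl, hI.2, chiVI_eq_single n I⟩

lemma H0_mul_W_le_of_forall {k : ℕ} {P : Submodule ℂ (MV n)}
    (h : ∀ (I : Fin n → ℤ) (T : Finset (Fin (n+1))) (i : Fin (n+1)), (∀ j, -1 ≤ mext n I j) →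
      deg1Set n I ⊆ T → T.card = k → single I (wedgeE n T * ExteriorAlgebra.ι ℂ (EE n i)) ∈ P) :
    H0 n k * W n ≤ P := by
  rw [H0_eq_span_monomialFields, W, Submodule.span_mul_span, Submodule.span_le]
  rintro _ ⟨_, ⟨I, T, hI, hIT, hT, rfl⟩, _, ⟨i, -, rfl⟩, rfl⟩
  change single I (wedgeE n T) * v n i ∈ P
  rw [single_mul_v]
  exact h I T i hI hIT hT

lemma H0_mul_W_le (k : ℕ) : H0 n k * W n ≤ H0 n (k+1) := by
  refine H0_mul_W_le_of_forall n fun I T i hI hIT hT => ?_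
  by_cases hiT : i ∈ T
  · rw [wedgeE, Finset.sortedProd_mul_eq_zero_of_mem (ι_EE_anticomm n)
      (fun _ => ExteriorAlgebra.ι_sq_zero _) hiT, single_zero]
    exact zero_mem _
  · have hgen : single I (wedgeE n (insert i T)) ∈ H0 n (k+1) := by
      rw [H0_eq_span_monomialFields]
      exact Submodule.subset_span ⟨I, insert i T, hI, hIT.trans (T.subset_insert i),
        by rw [Finset.card_insert_of_notMem hiT, hT], rfl⟩
    rcases Finset.sortedProd_mul_eq_or_eq_neg_sortedProd_insert (ι_EE_anticomm n) hiT with h | h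
    · rwa [wedgeE, h]
    · rw [wedgeE, h, single_neg]
      exact neg_mem hgen

lemma H0_succ_le (k : ℕ) :
    H0 n (k+1) ≤ H0 n k * W n ⊔ ⨆ I ∈ Slevel n (k+1), Submodule.span ℂ {chiVI n I} := by
  rw [H0_eq_span_monomialFields n (k+1), Submodule.span_le]
  rintro _ ⟨I, T, hI, hIT, hT, rfl⟩
  obtain hIT | hIT := hIT.eq_or_ssubset
  · subst hIT
    refine Submodule.mem_sup_right (Submodule.mem_iSup_of_mem I (Submodule.mem_iSup_of_mem
      ⟨hI, hT⟩ ?_))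
    rw [chiVI_eq_single]
    exact Submodule.mem_span_singleton_self _
  · obtain ⟨i, hiT, hiI⟩ := Finset.exists_of_ssubset hIT
    have hgen : single I (wedgeE n (T.erase i)) ∈ H0 n k := by
      rw [H0_eq_span_monomialFields]
      exact Submodule.subset_span ⟨I, T.erase i, hI,
        fun j hj => Finset.mem_erase.2 ⟨fun h => hiI (h ▸ hj), hIT.subset hj⟩,
        by rw [Finset.card_erase_of_mem hiT, hT, Nat.add_sub_cancel], rfl⟩
    have hmul : single I (wedgeE n (T.erase i) * ExteriorAlgebra.ι ℂ (EE n i)) ∈ H0 n k * W n := by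
      rw [← single_mul_v]
      exact Submodule.mul_mem_mul hgen (v_mem_W n i)
    refine Submodule.mem_sup_left ?_
    rcases Finset.sortedProd_eq_or_eq_neg_sortedProd_erase_mul (ι_EE_anticomm n) hiT with h | h
    · rwa [wedgeE, h]
    · rw [wedgeE, h, single_neg]
      exact neg_mem hmul

lemma H0_mul_W_le_supported (k : ℕ) :
    H0 n k * W n ≤ supported ℂ (ExteriorAlgebra ℂ (Fin n → ℂ)) {I | wt n I ≤ k} :=
  H0_mul_W_le_of_forall n fun _ _ _ _ hIT hT =>
    single_mem_supported _ (hT ▸ Finset.card_le_card hIT)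

lemma span_chiVI_le_supported (I : Fin n → ℤ) :
    Submodule.span ℂ {chiVI n I} ≤ supported ℂ (ExteriorAlgebra ℂ (Fin n → ℂ)) {I} := by
  rw [Submodule.span_singleton_le_iff_mem, chiVI_eq_single]
  exact single_mem_supported _ rfl

lemma iSup_span_chiVI_le_supported (k : ℕ) :
    ⨆ I ∈ Slevel n k, Submodule.span ℂ {chiVI n I} ≤
      supported ℂ (ExteriorAlgebra ℂ (Fin n → ℂ)) {I | wt n I = k} :=
  iSup₂_le fun I hI => (span_chiVI_le_supported n I).trans
    (supported_mono (Set.singleton_subset_iff.2 hI.2))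

theorem multivector_fields_recursive_decomposition_general (n k : ℕ) (hk1 : 1 ≤ k) :
    H0 n k = (H0 n (k-1) * W n) ⊔ (⨆ I ∈ Slevel n k, Submodule.span ℂ {chiVI n I}) ∧
    Disjoint (H0 n (k-1) * W n) (⨆ I ∈ Slevel n k, Submodule.span ℂ {chiVI n I}) ∧
    iSupIndep (fun I : (Slevel n k) => Submodule.span ℂ {chiVI n (I : Fin n → ℤ)}) := by
  obtain ⟨k, rfl⟩ : ∃ m, k = m + 1 := ⟨k - 1, by omega⟩
  rw [Nat.add_sub_cancel]
  refine ⟨le_antisymm (H0_succ_le n k) (sup_le (H0_mul_W_le n k) (iSup₂_le fun I hI =>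
    (Submodule.span_singleton_le_iff_mem _ _).2 (chiVI_mem_H0 n hI))), ?_, ?_⟩
  · have hwt : Disjoint {I | wt n I ≤ k} {I | wt n I = k + 1} :=
      Set.disjoint_left.2 fun I h₁ h₂ => by simp_all
    exact (disjoint_supported_supported hwt).mono (H0_mul_W_le_supported n k)
      (iSup_span_chiVI_le_supported n (k+1))
  · exact iSupIndep_of_le_supported_singleton Subtype.val_injective
      fun I => span_chiVI_le_supported n I

/-- For 1 ≤ k ≤ n,
H⁰(X, ∧ᵏ𝒯) = (H⁰(X, ∧^{k−1}𝒯) ∧ W) ⊕ (⊕_{I ∈ S(k)} ℂ χ^I·𝒱_I). -/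
theorem multivector_fields_recursive_decomposition (n k : ℕ) (hk1 : 1 ≤ k) (hk2 : k ≤ n) :
    H0 n k = (H0 n (k-1) * W n) ⊔ (⨆ I ∈ Slevel n k, Submodule.span ℂ {chiVI n I}) ∧
    Disjoint (H0 n (k-1) * W n) (⨆ I ∈ Slevel n k, Submodule.span ℂ {chiVI n I}) ∧
    iSupIndep (fun I : (Slevel n k) => Submodule.span ℂ {chiVI n (I : Fin n → ℤ)}) :=
  multivector_fields_recursive_decomposition_general n k hk1

end CPn
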